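/- Let p = (p₁,…,p_w) be a probability vector and define the averaged weight of a codeword (v₁u, …, v_w u) (with v_r = 1+z+⋯+z^{r-1} and u ∈ F₂[z] nonzero) as Σᵢ pᵢ·wt(vᵢ·u). If gcd of {v_i : p_i > 0} is 1, then the minimum averaged weight over nonzero finite-weight inputs u equals min(Σᵢ i·pᵢ, 2) = min(E[W], 2), where W takes value i with probability pᵢ. -/

import Mathlib

open Polynomial Finset

/-- v_r(z) = 1 + z + ⋯ + z^{r-1} over F₂. -/
noncomputable def vpoly (r : ℕ) : Polynomial (ZMod 2) :=
  ∑ i ∈ Finset.range r, Polynomial.X ^ i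

/-!
A monomial input `u = z^k` only shifts every `vᵢ`, so its averaged weight is `Σ i pᵢ = E[W]`.
Any other nonzero `u` has weight at least `2` in every component: over a domain, the natural
degree and the trailing degree are both additive under multiplication, so a product can only be
a monomial if both factors are. The input `u = 1 + z` attains this bound, since
`vᵢ (1 + z) = 1 + zⁱ`.
-/

namespace Polynomial

section Semiring

variable {R : Type*} [Semiring R]

theorem card_support_mul_X_pow (q : R[X]) (k : ℕ) : #(q * X ^ k).support = #q.support := by
  have hsupp : (q * X ^ k).support = q.support.image (· + k) := by
    ext m
    simp only [mem_support_iff, mem_image, coeff_mul_X_pow']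
    constructor
    · intro h
      by_cases hk : k ≤ m
      · exact ⟨m - k, by simpa [hk] using h, by omega⟩
      · simp [hk] at h
    · rintro ⟨a, ha, rfl⟩
      simpa using ha
  rw [hsupp, card_image_of_injective _ (add_left_injective k)]

theorem card_support_le_one_iff_natDegree_le_natTrailingDegree {f : R[X]} (hf : f ≠ 0) :
    #f.support ≤ 1 ↔ f.natDegree ≤ f.natTrailingDegree := by
  constructor
  · intro h
    exact (card_le_one.mp h _ (natDegree_mem_support_of_nonzero hf) _
      (natTrailingDegree_mem_support_of_nonzero hf)).le
  · intro h
    refine card_le_one.mpr fun a ha b hb => ?_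
    have := le_natDegree_of_mem_supp a ha
    have := le_natDegree_of_mem_supp b hb
    have := natTrailingDegree_le_of_mem_supp a ha
    have := natTrailingDegree_le_of_mem_supp b hb
    omega

theorem one_lt_card_support_mul_left [NoZeroDivisors R] {p q : R[X]} (hp : p ≠ 0)
    (hq : 1 < #q.support) : 1 < #(p * q).support := by
  have hq0 : q ≠ 0 := by rintro rfl; simp at hq
  rw [← not_le, card_support_le_one_iff_natDegree_le_natTrailingDegree (mul_ne_zero hp hq0),
    natDegree_mul hp hq0, natTrailingDegree_mul hp hq0]
  rw [← not_le, card_support_le_one_iff_natDegree_le_natTrailingDegree hq0] at hq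
  have := natTrailingDegree_le_natDegree (p := p)
  omega

end Semiring

theorem card_support_X_pow_sub_one {R : Type*} [Ring R] [Nontrivial R] {r : ℕ} (hr : 0 < r) :
    #(X ^ r - 1 : R[X]).support = 2 := by
  rw [card_support_eq_two]
  refine ⟨0, r, hr, -1, 1, neg_ne_zero.mpr one_ne_zero, one_ne_zero, ?_⟩
  simp only [map_neg, map_one, pow_zero, mul_one, one_mul]
  exact sub_eq_neg_add _ _

end Polynomial

theorem eq_X_pow_of_card_support_eq_one {u : (ZMod 2)[X]} (h : #u.support = 1) :
    ∃ k, u = X ^ k := by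
  obtain ⟨k, x, hx, rfl⟩ := card_support_eq_one.mp h
  have hx1 : x = 1 := (by decide : ∀ y : ZMod 2, y ≠ 0 → y = 1) x hx
  exact ⟨k, by rw [hx1, map_one, one_mul]⟩

theorem card_support_vpoly (r : ℕ) : #(vpoly r).support = r := by
  have hsupp : (vpoly r).support = range r := by
    ext k
    by_cases h : k < r <;> simp [vpoly, coeff_X_pow, h]
  rw [hsupp, card_range]

theorem vpoly_ne_zero {r : ℕ} (hr : 0 < r) : vpoly r ≠ 0 := by
  rw [Ne, ← card_support_eq_zero, card_support_vpoly]
  exact hr.ne'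

theorem vpoly_mul_X_sub_one (r : ℕ) : vpoly r * (X - 1) = X ^ r - 1 := geom_sum_mul X r

noncomputable def avgWeight (w : ℕ) (p : ℕ → ℝ) (u : (ZMod 2)[X]) : ℝ :=
  ∑ i ∈ Icc 1 w, p i * (#(vpoly i * u).support : ℝ)

section avgWeight

variable {w : ℕ} {p : ℕ → ℝ}

theorem avgWeight_X_pow (k : ℕ) : avgWeight w p (X ^ k) = ∑ i ∈ Icc 1 w, (i : ℝ) * p i := by
  refine sum_congr rfl fun i _ => ?_
  rw [card_support_mul_X_pow, card_support_vpoly, mul_comm]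

theorem avgWeight_X_sub_one (hp1 : ∑ i ∈ Icc 1 w, p i = 1) : avgWeight w p (X - 1) = 2 := by
  calc avgWeight w p (X - 1) = ∑ i ∈ Icc 1 w, p i * 2 := by
        refine sum_congr rfl fun i hi => ?_
        rw [vpoly_mul_X_sub_one, card_support_X_pow_sub_one (mem_Icc.mp hi).1, Nat.cast_ofNat]
    _ = 2 := by rw [← sum_mul, hp1, one_mul]

theorem two_le_avgWeight (hp0 : ∀ i, 0 ≤ p i) (hp1 : ∑ i ∈ Icc 1 w, p i = 1)
    {u : (ZMod 2)[X]} (hu : 1 < #u.support) : 2 ≤ avgWeight w p u := by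
  calc (2 : ℝ) = ∑ i ∈ Icc 1 w, p i * 2 := by rw [← sum_mul, hp1, one_mul]
    _ ≤ avgWeight w p u := by
        refine sum_le_sum fun i hi => mul_le_mul_of_nonneg_left ?_ (hp0 i)
        exact_mod_cast one_lt_card_support_mul_left (vpoly_ne_zero (mem_Icc.mp hi).1) hu

end avgWeight

theorem averaged_free_distance_general (w : ℕ) (p : ℕ → ℝ)
    (hp0 : ∀ i, 0 ≤ p i) (hp1 : ∑ i ∈ Finset.Icc 1 w, p i = 1) :
    IsLeast
      {x : ℝ | ∃ u : Polynomial (ZMod 2), u ≠ 0 ∧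
        x = ∑ i ∈ Finset.Icc 1 w, p i * (((vpoly i) * u).support.card : ℝ)}
      (min (∑ i ∈ Finset.Icc 1 w, (i : ℝ) * p i) 2) := by
  constructor
  · rcases le_total (∑ i ∈ Icc 1 w, (i : ℝ) * p i) 2 with h | h
    · refine ⟨X ^ 0, pow_ne_zero 0 X_ne_zero, ?_⟩
      rw [min_eq_left h]
      exact (avgWeight_X_pow 0).symm
    · refine ⟨X - C 1, X_sub_C_ne_zero 1, ?_⟩
      rw [min_eq_right h, map_one]
      exact (avgWeight_X_sub_one hp1).symm
  · rintro x ⟨u, hu, rfl⟩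
    change _ ≤ avgWeight w p u
    rcases Nat.lt_or_eq_of_le (card_pos.mpr (nonempty_support_iff.mpr hu)) with hmulti | hmono
    · exact (min_le_right _ _).trans (two_le_avgWeight hp0 hp1 hmulti)
    · obtain ⟨k, rfl⟩ := eq_X_pow_of_card_support_eq_one hmono.symm
      exact (min_le_left _ _).trans (avgWeight_X_pow k).ge

/-- Averaged free distance: if the gcd of the generators v_i on the support of the
probability vector p is 1, then the minimum over nonzero inputs u of the averaged
weight Σᵢ pᵢ·wt(vᵢ·u) equals min(E[W], 2) where E[W] = Σᵢ i·pᵢ. -/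
theorem averaged_free_distance (w : ℕ) (hw : 1 ≤ w) (p : ℕ → ℝ)
    (hp0 : ∀ i, 0 ≤ p i) (hp1 : ∑ i ∈ Finset.Icc 1 w, p i = 1)
    (hgcd : ∀ d : Polynomial (ZMod 2),
      (∀ i ∈ Finset.Icc 1 w, 0 < p i → d ∣ vpoly i) → IsUnit d) :
    IsLeast
      {x : ℝ | ∃ u : Polynomial (ZMod 2), u ≠ 0 ∧
        x = ∑ i ∈ Finset.Icc 1 w, p i * (((vpoly i) * u).support.card : ℝ)}
      (min (∑ i ∈ Finset.Icc 1 w, (i : ℝ) * p i) 2) :=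
  averaged_free_distance_general w p hp0 hp1
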